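/- For 3 ≤ n ≤ m, the correlation polynomials satisfy C_{M_n,M_m}(z) = C_{M_m,M_n}(z) = Σ_{b ∈ B_n ∩ B_m} z^{|b|−1}, where B_n, B_m are the sets of nonempty borders of M_n and M_m. -/

import Mathlib

/-- The Fibonacci morphism: `false` (=0) ↦ 01, `true` (=1) ↦ 0. -/
def phi (w : List Bool) : List Bool :=
  w.flatMap (fun b => if b then [false] else [false, true])

/-- The Fibonacci words: f₁ = 1, f₂ = 0, f_{n+2} = f_{n+1} f_n. -/
def fw : ℕ → List Bool
  | 0 => []
  | 1 => [true]
  | 2 => [false]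
  | (n+3) => fw (n+2) ++ fw (n+1)

/-- Palindromic prefix: f_n with its last two letters removed. -/
def pw (n : ℕ) : List Bool := (fw n).dropLast.dropLast

/-- Minimal forbidden words of the Fibonacci word:
`M_{2n+1} = 1 p_{2n+1} 1`, `M_{2n+2} = 0 p_{2n+2} 0`. -/
def Mw (n : ℕ) : List Bool :=
  if n % 2 = 0 then false :: (pw n ++ [false]) else true :: (pw n ++ [true])

/-- Correlation bit: `corr u v k` holds iff `C_{u,v}[k] = 1`. -/
def corr {α : Type*} (u v : List α) (k : ℕ) : Prop :=
  ∀ i j : ℕ, i < u.length → j < v.length → i = j + k → u[i]? = v[j]?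

/-- A border of a word is both a prefix and a suffix. -/
def IsBorder {α : Type*} (b w : List α) : Prop := b <+: w ∧ b <:+ w

/-- The set of nonempty borders of `M_n`. -/
def Bset (n : ℕ) : Set (List Bool) := {b | b ≠ [] ∧ IsBorder b (Mw n)}

open scoped Classical in
/-- The correlation polynomial `C_{u,v}(z) = ∑_{k<|u|} C_{u,v}[k] z^{|u|-1-k}`. -/
noncomputable def corrPoly (u v : List Bool) : Polynomial ℤ :=
  ∑ k ∈ Finset.range u.length,
    if corr u v k then Polynomial.X ^ (u.length - 1 - k) else 0

open scoped Classical in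
/-- The nonempty borders of `w`, as a finset. -/
noncomputable def borderFinset (w : List Bool) : Finset (List Bool) :=
  ((Finset.range (w.length + 1)).image (fun k => w.take k)).filter
    (fun b => b ≠ [] ∧ b <:+ w)

/-!
Both words are palindromes, so the suffix of `M_n` of length `ℓ` is the reversed prefix, and an
overlap of length `ℓ ≤ |M_n|` of `M_n` with `M_m`, in either order, means
`reverse (take ℓ M_n) = take ℓ M_m`. Writing `M_x = b_x p_x b_x` with `p_n` a prefix of `p_m`,
for `ℓ < |M_n|` both prefixes are `b :: t` for one word `t`, and `reverse (b_n :: t) = b_m :: t`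
forces `b_n = b_m` by counting letters. So every overlap is a common palindromic prefix, i.e. a
common border. An overlap of `M_m` with `M_n` longer than `|M_n|` would put `M_n` inside `M_m`
minus its last letter: either as a prefix of `M_m`, excluded by the letter that follows `p_n` in
`p_m`, or inside `p_m`, a factor of the Fibonacci word, in which `M_n` does not occur.
-/

section Correlation

variable {α : Type*} {u v : List α} {k ℓ : ℕ}

lemma corr_iff_drop_prefix (h : u.length ≤ v.length + k) : corr u v k ↔ u.drop k <+: v := by
  rw [List.prefix_iff_getElem?]
  constructor
  · intro hc i hi
    rw [List.length_drop] at hi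
    rw [List.getElem_drop, ← List.getElem?_eq_getElem,
      hc (k + i) i (by omega) (by omega) (by omega)]
  · rintro hp i j hi hj rfl
    have := hp j (by rw [List.length_drop]; omega)
    rw [List.getElem_drop, ← List.getElem?_eq_getElem, Nat.add_comm] at this
    exact this.symm

lemma infix_dropLast_of_corr (h : v.length + k < u.length) (hc : corr u v k) :
    v <:+: u.dropLast := by
  have hp : v <+: u.dropLast.drop k := by
    rw [List.prefix_iff_getElem?]
    intro i hi
    rw [List.getElem?_drop, List.getElem?_dropLast, if_pos (by omega),
      hc (k + i) i (by omega) hi (by omega), List.getElem?_eq_getElem hi]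
  exact hp.isInfix.trans (List.drop_suffix k _).isInfix

lemma corr_iff_reverse_take_eq (hu : u.reverse = u) (hℓu : ℓ ≤ u.length)
    (hℓv : ℓ ≤ v.length) :
    corr u v (u.length - ℓ) ↔ (u.take ℓ).reverse = v.take ℓ := by
  rw [corr_iff_drop_prefix (by omega), List.prefix_iff_eq_take, List.length_drop,
    Nat.sub_sub_self hℓu, List.reverse_take, hu]

end Correlation

open Polynomial Finset

/-- For a palindrome `u` with `|u| ≤ |v|`, the coefficient of `X ^ j` is the correlation bit
`C_{u,v}[|u|-1-j]`. -/
noncomputable def revOverlapPoly (u v : List Bool) : ℤ[X] :=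
  ∑ j ∈ range u.length, if (u.take (j + 1)).reverse = v.take (j + 1) then X ^ j else 0

open scoped Classical in
lemma corrPoly_eq_sum_range (u v : List Bool) :
    corrPoly u v =
      ∑ j ∈ range u.length, if corr u v (u.length - (j + 1)) then X ^ j else 0 := by
  rw [corrPoly, ← sum_range_reflect]
  refine sum_congr rfl fun j hj => ?_
  rw [mem_range] at hj
  rw [show u.length - 1 - (u.length - 1 - j) = j by omega,
    show u.length - 1 - j = u.length - (j + 1) by omega]

section Palindrome

variable {u v : List Bool}

lemma corrPoly_eq_revOverlapPoly (hu : u.reverse = u) (h : u.length ≤ v.length) :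
    corrPoly u v = revOverlapPoly u v := by
  rw [corrPoly_eq_sum_range, revOverlapPoly]
  refine sum_congr rfl fun j hj => ?_
  rw [mem_range] at hj
  simp only [corr_iff_reverse_take_eq (v := v) hu (by omega : j + 1 ≤ u.length) (by omega)]

lemma corrPoly_swap_eq_revOverlapPoly (hv : v.reverse = v) (h : u.length ≤ v.length)
    (hu : ¬ u <:+: v.dropLast) : corrPoly v u = revOverlapPoly u v := by
  classical
  rw [corrPoly_eq_sum_range, revOverlapPoly, ← sum_subset (range_subset_range.mpr h)]
  · refine sum_congr rfl fun j hj => ?_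
    rw [mem_range] at hj
    have hswap : (v.take (j + 1)).reverse = u.take (j + 1) ↔
        (u.take (j + 1)).reverse = v.take (j + 1) := by
      rw [List.reverse_eq_iff, eq_comm]
    simp only [corr_iff_reverse_take_eq (v := u) hv (by omega : j + 1 ≤ v.length) (by omega),
      hswap]
  · intro j hjv hju
    rw [mem_range] at hjv hju
    exact if_neg fun hc => hu (infix_dropLast_of_corr (by omega) hc)

lemma mem_borderFinset {b w : List Bool} :
    b ∈ borderFinset w ↔ b ≠ [] ∧ b <+: w ∧ b <:+ w := by
  simp only [borderFinset, mem_filter, mem_image, mem_range]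
  constructor
  · rintro ⟨⟨k, -, rfl⟩, hne, hsuf⟩
    exact ⟨hne, List.take_prefix _ _, hsuf⟩
  · rintro ⟨hne, hpre, hsuf⟩
    refine ⟨⟨b.length, Nat.lt_succ_of_le hpre.length_le, ?_⟩, hne, hsuf⟩
    exact (List.prefix_iff_eq_take.mp hpre).symm

lemma mem_borderFinset_inter_iff (hu : u.reverse = u) (hv : v.reverse = v) {b : List Bool} :
    b ∈ borderFinset u ∩ borderFinset v ↔
      b ≠ [] ∧ b <+: u ∧ b <+: v ∧ b.reverse = b := by
  have hsuf : ∀ {w : List Bool}, w.reverse = w → (b <:+ w ↔ b.reverse <+: w) := fun hw => by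
    rw [← List.reverse_prefix, hw]
  rw [mem_inter, mem_borderFinset, mem_borderFinset, hsuf hu, hsuf hv]
  constructor
  · rintro ⟨⟨hne, hbu, hbu'⟩, -, hbv, -⟩
    refine ⟨hne, hbu, hbv, ?_⟩
    exact (List.prefix_of_prefix_length_le hbu' hbu (by simp)).eq_of_length (by simp)
  · rintro ⟨hne, hbu, hbv, hrev⟩
    rw [hrev]
    exact ⟨⟨hne, hbu, hbu⟩, hne, hbv, hbv⟩

lemma sum_borderFinset_inter_eq_revOverlapPoly (hu : u.reverse = u) (hv : v.reverse = v)
    (H : ∀ ℓ ≤ u.length, (u.take ℓ).reverse = v.take ℓ → u.take ℓ = v.take ℓ) :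
    ∑ b ∈ borderFinset u ∩ borderFinset v, (X : ℤ[X]) ^ (b.length - 1) =
      revOverlapPoly u v := by
  classical
  have hset : borderFinset u ∩ borderFinset v =
      ((range u.length).filter fun j => (u.take (j + 1)).reverse = v.take (j + 1)).image
        fun j => u.take (j + 1) := by
    ext b
    simp only [mem_borderFinset_inter_iff hu hv, mem_image, mem_filter, mem_range]
    constructor
    · rintro ⟨hne, hbu, hbv, hrev⟩
      have hlen : b.length - 1 + 1 = b.length := Nat.sub_add_cancel (List.length_pos_iff.mpr hne)
      have hbu' : u.take b.length = b := (List.prefix_iff_eq_take.mp hbu).symm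
      have hbv' : v.take b.length = b := (List.prefix_iff_eq_take.mp hbv).symm
      refine ⟨b.length - 1, ⟨by have := hbu.length_le; omega, ?_⟩, ?_⟩ <;> rw [hlen]
      · rw [hbu', hbv', hrev]
      · exact hbu'
    · rintro ⟨j, ⟨hj, hrev⟩, rfl⟩
      have heq := H (j + 1) hj hrev
      refine ⟨?_, List.take_prefix _ _, heq ▸ List.take_prefix _ _, hrev.trans heq.symm⟩
      rw [← List.length_pos_iff, List.length_take]
      omega
  rw [hset, sum_image, revOverlapPoly, sum_filter]
  · refine sum_congr rfl fun j hj => ?_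
    rw [mem_range] at hj
    rw [List.length_take, min_eq_left hj, Nat.add_sub_cancel]
  · intro i hi j hj hij
    simp only [coe_filter, mem_range, Set.mem_ofPred_eq] at hi hj
    have := congrArg List.length hij
    simp only [List.length_take] at this
    omega

end Palindrome

lemma fw_add_two {n : ℕ} (hn : 1 ≤ n) : fw (n + 2) = fw (n + 1) ++ fw n := by
  obtain ⟨k, rfl⟩ := Nat.exists_eq_add_of_le' hn
  rfl

lemma pw_eq_of_fw_eq {n : ℕ} {x : List Bool} {a b : Bool} (h : fw n = x ++ [a, b]) :
    pw n = x := by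
  simp [pw, h]

lemma fw_eq_pw_append : ∀ {n : ℕ}, 3 ≤ n → fw n = pw n ++ [!n.bodd, n.bodd]
  | 3, _ | 4, _ => by decide
  | n + 5, _ => by
    have h : fw (n + 5) = (fw (n + 4) ++ pw (n + 3)) ++ [!(n + 5).bodd, (n + 5).bodd] := by
      rw [fw_add_two (by omega), fw_eq_pw_append (n := n + 3) (by omega)]
      simp
    rwa [← pw_eq_of_fw_eq h] at h

lemma pw_add_two {n : ℕ} (hn : 3 ≤ n) : pw (n + 2) = fw (n + 1) ++ pw n := by
  apply pw_eq_of_fw_eq (a := !(n + 2).bodd) (b := (n + 2).bodd)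
  rw [fw_add_two (by omega), fw_eq_pw_append hn]
  simp

lemma fw_append_pw_succ : ∀ {n : ℕ}, 2 ≤ n → fw n ++ pw (n + 1) = pw (n + 2)
  | 2, _ => by decide
  | n + 3, _ => by
    rw [pw_add_two (n := n + 3) (by omega), fw_add_two (n := n + 2) (by omega),
      List.append_assoc, fw_append_pw_succ (n := n + 2) (by omega)]

lemma pw_reverse : ∀ n : ℕ, (pw n).reverse = pw n
  | 0 | 1 | 2 | 3 | 4 => by decide
  | n + 5 => by
    have hA : pw (n + 5) = pw (n + 4) ++ [!(n + 4).bodd, (n + 4).bodd] ++ pw (n + 3) := by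
      rw [pw_add_two (n := n + 3) (by omega), fw_eq_pw_append (n := n + 4) (by omega)]
    have hB : pw (n + 5) = pw (n + 3) ++ [!(n + 3).bodd, (n + 3).bodd] ++ pw (n + 4) := by
      rw [← fw_append_pw_succ (n := n + 3) (by omega), fw_eq_pw_append (n := n + 3) (by omega)]
    calc (pw (n + 5)).reverse
        = pw (n + 3) ++ [!(n + 3).bodd, (n + 3).bodd] ++ pw (n + 4) := by
          rw [hA]; simp [pw_reverse (n + 3), pw_reverse (n + 4), Nat.bodd_succ]
      _ = pw (n + 5) := hB.symm

lemma pw_append_not_bodd_prefix_pw_succ :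
    ∀ {n : ℕ}, 3 ≤ n → pw n ++ [!n.bodd] <+: pw (n + 1)
  | 3, _ => by decide
  | n + 4, _ => by
    rw [show n + 4 + 1 = n + 3 + 2 from rfl, pw_add_two (n := n + 3) (by omega),
      fw_eq_pw_append (n := n + 4) (by omega)]
    simp

lemma pw_append_not_bodd_prefix {n m : ℕ} (hn : 3 ≤ n) (hnm : n < m) :
    pw n ++ [!n.bodd] <+: pw m := by
  induction m, hnm using Nat.le_induction with
  | base => exact pw_append_not_bodd_prefix_pw_succ hn
  | succ k hk ih =>
    exact ih.trans <|
      (List.prefix_append _ _).trans (pw_append_not_bodd_prefix_pw_succ (by omega))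

lemma pw_prefix_pw {n m : ℕ} (hn : 3 ≤ n) (hnm : n ≤ m) : pw n <+: pw m := by
  rcases hnm.eq_or_lt with rfl | hlt
  · exact List.prefix_refl _
  · exact (List.prefix_append _ _).trans (pw_append_not_bodd_prefix hn hlt)

lemma Mw_eq (n : ℕ) : Mw n = n.bodd :: (pw n ++ [n.bodd]) := by
  rw [Mw, Nat.mod_two_of_bodd]
  cases n.bodd <;> simp

lemma Mw_length (n : ℕ) : (Mw n).length = (pw n).length + 2 := by
  simp [Mw_eq]

lemma Mw_reverse (n : ℕ) : (Mw n).reverse = Mw n := by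
  simp [Mw_eq, pw_reverse]

lemma Mw_not_prefix {n m : ℕ} (hn : 3 ≤ n) (hnm : n < m) : ¬ Mw n <+: Mw m := by
  rw [Mw_eq, Mw_eq, List.cons_prefix_cons]
  rintro ⟨hb, h⟩
  rw [← hb] at h
  have h' : pw n ++ [!n.bodd] <+: pw m ++ [n.bodd] :=
    (pw_append_not_bodd_prefix hn hnm).trans (List.prefix_append _ _)
  have := (List.prefix_of_prefix_length_le h h' (by simp)).eq_of_length (by simp)
  simp at this

@[simp] lemma phi_nil : phi [] = [] := rfl

@[simp] lemma phi_cons_true (w : List Bool) : phi (true :: w) = false :: phi w := rfl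

@[simp] lemma phi_cons_false (w : List Bool) : phi (false :: w) = false :: true :: phi w := rfl

@[simp] lemma phi_append (u v : List Bool) : phi (u ++ v) = phi u ++ phi v :=
  List.flatMap_append

lemma phi_head?_ne_true (w : List Bool) : (phi w).head? ≠ some true := by
  rcases w with _ | ⟨_ | _, _⟩ <;> simp

/-- Every `false` in `phi w` starts a block, so `phi w` can be cut before any such letter. -/
lemma phi_split {w l r : List Bool} (h : l ++ r = phi w) (hr : r.head? ≠ some true) :
    ∃ w₁ w₂, w = w₁ ++ w₂ ∧ phi w₁ = l ∧ phi w₂ = r := by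
  induction w generalizing l with
  | nil =>
    obtain ⟨rfl, rfl⟩ := List.append_eq_nil_iff.mp h
    exact ⟨[], [], rfl, rfl, rfl⟩
  | cons c w ih =>
    rcases l with _ | ⟨x, l⟩
    · exact ⟨[], c :: w, rfl, rfl, h.symm⟩
    cases c
    · rcases l with _ | ⟨y, l⟩
      · simp only [List.nil_append, List.cons_append, phi_cons_false, List.cons.injEq] at h
        simp [h.2] at hr
      simp only [List.cons_append, phi_cons_false, List.cons.injEq] at h
      obtain ⟨w₁, w₂, rfl, rfl, rfl⟩ := ih h.2.2
      exact ⟨false :: w₁, w₂, rfl, by simp [h.1, h.2.1], rfl⟩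
    · simp only [List.cons_append, phi_cons_true, List.cons.injEq] at h
      obtain ⟨w₁, w₂, rfl, rfl, rfl⟩ := ih h.2
      exact ⟨true :: w₁, w₂, rfl, by simp [h.1], rfl⟩

lemma phi_injective : Function.Injective phi := by
  intro u
  induction u with
  | nil => rintro (_ | ⟨_ | _, _⟩) h <;> simp_all
  | cons c u ih =>
    rintro (_ | ⟨d, v⟩) h
    · cases c <;> simp at h
    cases c <;> cases d <;> simp only [phi_cons_true, phi_cons_false, List.cons.injEq] at h
    · rw [ih h.2.2]
    · exact (phi_head?_ne_true v (by simp [← h.2])).elim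
    · exact (phi_head?_ne_true u (by simp [h.2])).elim
    · rw [ih h.2]

lemma infix_of_append_phi_append_eq_phi {l u r w : List Bool} (h : l ++ phi u ++ r = phi w)
    (hr : r.head? ≠ some true) : u <:+: w := by
  obtain ⟨w₁, w₂, rfl, h₁, -⟩ := phi_split h hr
  obtain ⟨w₁₁, w₁₂, rfl, -, h₂⟩ := phi_split h₁.symm (phi_head?_ne_true u)
  rw [phi_injective h₂]
  exact ⟨w₁₁, w₂, rfl⟩

lemma not_true_true_infix_phi (w : List Bool) : ¬ [true, true] <:+: phi w := by
  induction w with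
  | nil => simp
  | cons c w ih =>
    have : ¬ [true] <+: phi w := fun h => phi_head?_ne_true w (by
      obtain ⟨t, ht⟩ := h; simp [← ht])
    cases c <;> simp [List.infix_cons_iff, ih, this]

lemma fw_succ_eq_phi : ∀ {n : ℕ}, 1 ≤ n → fw (n + 1) = phi (fw n)
  | 1, _ | 2, _ => by decide
  | n + 3, _ =>
    calc fw (n + 4) = fw (n + 3) ++ fw (n + 2) := fw_add_two (by omega)
      _ = phi (fw (n + 2)) ++ phi (fw (n + 1)) := by
        rw [fw_succ_eq_phi (n := n + 2) (by omega), fw_succ_eq_phi (n := n + 1) (by omega)]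
      _ = phi (fw (n + 3)) := by rw [← phi_append, fw_add_two (n := n + 1) (by omega)]

lemma not_true_true_infix_fw : ∀ n : ℕ, ¬ [true, true] <:+: fw n
  | 0 | 1 => by decide
  | n + 2 => by
    rw [fw_succ_eq_phi (by omega)]
    exact not_true_true_infix_phi _

lemma pw_succ_eq_phi {n : ℕ} (hn : 3 ≤ n) : pw (n + 1) = phi (pw n) ++ [false] := by
  have h := fw_succ_eq_phi (n := n) (by omega)
  rw [fw_eq_pw_append hn] at h
  apply pw_eq_of_fw_eq (a := n.bodd) (b := !n.bodd)
  cases hb : n.bodd <;> simpa [hb] using h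

lemma Mw_succ_eq_phi_append {n : ℕ} (hn : 3 ≤ n) (h : n.bodd = true) :
    Mw (n + 1) = phi (Mw n) ++ [false] := by
  simp [Mw_eq, h, pw_succ_eq_phi hn]

lemma phi_Mw_eq_cons {n : ℕ} (hn : 3 ≤ n) (h : n.bodd = false) :
    phi (Mw n) = false :: Mw (n + 1) := by
  simp [Mw_eq, h, pw_succ_eq_phi hn]

/-- `φ (M_n)` is `M_{n+1}` up to a `0` at one end, and the letters around an occurrence of
`M_{n+1}` in `f_{j+2} = φ (f_{j+1})` supply that `0` and a cut at a block boundary, so the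
occurrence desubstitutes to one of `M_n` in `f_{j+1}`. -/
lemma Mw_not_infix_fw {n : ℕ} (hn : 3 ≤ n) : ∀ k, ¬ Mw n <:+: fw k := by
  induction n, hn using Nat.le_induction with
  | base => simpa [show Mw 3 = [true, true] by decide] using not_true_true_infix_fw
  | succ n hn ih =>
    rintro k ⟨l, r, h⟩
    obtain ⟨j, rfl⟩ : ∃ j, k = j + 2 := by
      have hk : (Mw (n + 1)).length ≤ (fw k).length := by rw [← h]; simp; omega
      rcases k with _ | _ | j
      · simp [Mw_length, fw] at hk
      · simp [Mw_length, fw] at hk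
      · exact ⟨j, rfl⟩
    rw [fw_succ_eq_phi (by omega)] at h
    cases hb : n.bodd
    · have hM : Mw (n + 1) = true :: (pw (n + 1) ++ [true]) := by simp [Mw_eq, hb]
      have hr : r.head? ≠ some true := by
        intro hr
        obtain ⟨r', rfl⟩ := List.head?_eq_some_iff.mp hr
        exact not_true_true_infix_phi _ ⟨l ++ true :: pw (n + 1), r', by rw [← h, hM]; simp⟩
      obtain ⟨L, rfl⟩ : ∃ L, l = L ++ [false] := by
        rcases List.eq_nil_or_concat l with rfl | ⟨L, _ | _, rfl⟩
        · exact (phi_head?_ne_true (fw (j + 1)) (by rw [← h, hM]; simp)).elim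
        · exact ⟨L, List.concat_eq_append⟩
        · refine (not_true_true_infix_phi (fw (j + 1)) ⟨L, pw (n + 1) ++ true :: r, ?_⟩).elim
          rw [← h, hM]
          simp
      refine ih (j + 1) (infix_of_append_phi_append_eq_phi (l := L) ?_ hr)
      rw [phi_Mw_eq_cons hn hb]
      simpa using h
    · rw [Mw_succ_eq_phi_append hn hb, ← List.append_assoc] at h
      exact ih (j + 1)
        (infix_of_append_phi_append_eq_phi (r := false :: r) (by simpa using h) (by simp))

lemma Mw_length_le {n m : ℕ} (hn : 3 ≤ n) (hnm : n ≤ m) :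
    (Mw n).length ≤ (Mw m).length := by
  have := (pw_prefix_pw hn hnm).length_le
  rw [Mw_length, Mw_length]
  omega

lemma Mw_not_infix_dropLast {n m : ℕ} (hn : 3 ≤ n) (hnm : n ≤ m) :
    ¬ Mw n <:+: (Mw m).dropLast := by
  rcases hnm.eq_or_lt with rfl | hlt
  · intro h
    have := h.length_le
    rw [List.length_dropLast, Mw_length] at this
    omega
  have hdrop : (Mw m).dropLast = m.bodd :: pw m := by
    rw [Mw_eq, ← List.cons_append, List.dropLast_concat]
  rw [hdrop, List.infix_cons_iff]
  rintro (h | h)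
  · exact Mw_not_prefix hn hlt (h.trans (by simp [Mw_eq]))
  · refine Mw_not_infix_fw hn m (h.trans ?_)
    rw [fw_eq_pw_append (by omega)]
    exact (List.prefix_append _ _).isInfix

lemma Mw_take_eq_of_reverse {n m ℓ : ℕ} (hn : 3 ≤ n) (hnm : n ≤ m)
    (hℓ : ℓ ≤ (Mw n).length) (h : ((Mw n).take ℓ).reverse = (Mw m).take ℓ) :
    (Mw n).take ℓ = (Mw m).take ℓ := by
  rcases hℓ.eq_or_lt with rfl | hlt
  · rw [← h, List.take_length, Mw_reverse]
  rcases ℓ with _ | j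
  · simp
  have hj : j ≤ (pw n).length := by rw [Mw_length] at hlt; omega
  have hm : j ≤ (pw m).length := hj.trans (pw_prefix_pw hn hnm).length_le
  have htake : ∀ x, j ≤ (pw x).length → (Mw x).take (j + 1) = x.bodd :: (pw x).take j := by
    intro x hx
    rw [Mw_eq, List.take_succ_cons, List.take_append_of_le_length hx]
  have hpre : (pw m).take j = (pw n).take j := by
    obtain ⟨t, ht⟩ := pw_prefix_pw hn hnm
    rw [← ht, List.take_append_of_le_length hj]
  rw [htake n hj, htake m hm, hpre] at h ⊢
  have hperm : List.Perm ([m.bodd] ++ (pw n).take j) ([n.bodd] ++ (pw n).take j) := by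
    simpa only [List.singleton_append, h] using List.reverse_perm (n.bodd :: (pw n).take j)
  rw [List.singleton_perm_singleton.mp ((List.perm_append_right_iff _).mp hperm)]

theorem stmt19 (n m : ℕ) (hn : 3 ≤ n) (hnm : n ≤ m) :
    corrPoly (Mw n) (Mw m) = corrPoly (Mw m) (Mw n) ∧
    corrPoly (Mw n) (Mw m) =
      ∑ b ∈ borderFinset (Mw n) ∩ borderFinset (Mw m),
        Polynomial.X ^ (b.length - 1) := by
  have hlen := Mw_length_le hn hnm
  have hnm_corr : corrPoly (Mw n) (Mw m) = revOverlapPoly (Mw n) (Mw m) :=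
    corrPoly_eq_revOverlapPoly (Mw_reverse n) hlen
  have hmn_corr : corrPoly (Mw m) (Mw n) = revOverlapPoly (Mw n) (Mw m) :=
    corrPoly_swap_eq_revOverlapPoly (Mw_reverse m) hlen (Mw_not_infix_dropLast hn hnm)
  have hborders : ∑ b ∈ borderFinset (Mw n) ∩ borderFinset (Mw m),
      (X : ℤ[X]) ^ (b.length - 1) = revOverlapPoly (Mw n) (Mw m) :=
    sum_borderFinset_inter_eq_revOverlapPoly (Mw_reverse n) (Mw_reverse m)
      fun _ hℓ => Mw_take_eq_of_reverse hn hnm hℓ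
  exact ⟨hnm_corr.trans hmn_corr.symm, hnm_corr.trans hborders.symm⟩
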